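/- arXiv:1707.09393 — 2 statements merged into one kernel-verified Lean document; each statement's English description precedes it below -/
import Mathlib

section
/- For any k > 0 and any finite nonempty family of reals a_0,...,a_n, the derivative of k ↦ log(∑_i exp(k·a_i))/k is (1/k)·(∑_i a_i·p_i − log(∑_i exp(k·a_i))/k), where p_i = exp(k·a_i)/∑_j exp(k·a_j), and this derivative is nonpositive. -/
/-!
Write `L t = log ∑ i, exp (t * a i)`. Its derivative is the mean of `a` under the softmax weights
at `t`, and the quotient rule gives `(L t / t)' = (L' t - L t / t) / t`. Since `exp (t * a i)` is one
of the summands, `t * a i ≤ L t` for every `i`, so the softmax mean `L' t` is at most `L t / t`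
when `t > 0`.
-/

open Real Finset

noncomputable section

variable {ι : Type*} [Fintype ι]

def softmax (a : ι → ℝ) (k : ℝ) (i : ι) : ℝ :=
  exp (k * a i) / ∑ j, exp (k * a j)

lemma sum_exp_mul_pos [Nonempty ι] (a : ι → ℝ) (k : ℝ) : 0 < ∑ j, exp (k * a j) :=
  sum_pos (fun _ _ => exp_pos _) univ_nonempty

lemma softmax_nonneg (a : ι → ℝ) (k : ℝ) (i : ι) : 0 ≤ softmax a k i :=
  div_nonneg (exp_pos _).le (sum_nonneg fun _ _ => (exp_pos _).le)

lemma sum_softmax [Nonempty ι] (a : ι → ℝ) (k : ℝ) : ∑ i, softmax a k i = 1 := by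
  simp only [softmax]
  rw [← sum_div, div_self (sum_exp_mul_pos a k).ne']

lemma sum_mul_softmax_le [Nonempty ι] {a : ι → ℝ} {M : ℝ} (k : ℝ) (h : ∀ i, a i ≤ M) :
    ∑ i, a i * softmax a k i ≤ M :=
  calc ∑ i, a i * softmax a k i
      ≤ ∑ i, M * softmax a k i :=
        sum_le_sum fun i _ => mul_le_mul_of_nonneg_right (h i) (softmax_nonneg a k i)
    _ = M := by rw [← mul_sum, sum_softmax, mul_one]

lemma mul_le_log_sum_exp_mul (a : ι → ℝ) (k : ℝ) (i : ι) :
    k * a i ≤ log (∑ j, exp (k * a j)) := by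
  rw [← log_exp (k * a i)]
  exact log_le_log (exp_pos _)
    (single_le_sum (f := fun j => exp (k * a j)) (fun _ _ => (exp_pos _).le) (mem_univ i))

lemma hasDerivAt_log_sum_exp_mul [Nonempty ι] (a : ι → ℝ) (k : ℝ) :
    HasDerivAt (fun t => log (∑ i, exp (t * a i))) (∑ i, a i * softmax a k i) k := by
  have hsum : HasDerivAt (fun t => ∑ i, exp (t * a i)) (∑ i, exp (k * a i) * a i) k :=
    HasDerivAt.fun_sum fun i _ => by simpa using ((hasDerivAt_id k).mul_const (a i)).exp
  convert hsum.log (sum_exp_mul_pos a k).ne' using 1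
  simp only [softmax, sum_div]
  exact sum_congr rfl fun i _ => by ring

end

theorem gsoft_deriv {ι : Type*} [Fintype ι] [Nonempty ι] (a : ι → ℝ)
    (k : ℝ) (hk : 0 < k) :
    HasDerivAt (fun t : ℝ => Real.log (∑ i, Real.exp (t * a i)) / t)
      ((1 / k) * ((∑ i, a i * (Real.exp (k * a i) / ∑ j, Real.exp (k * a j))) -
        Real.log (∑ i, Real.exp (k * a i)) / k)) k ∧
    (1 / k) * ((∑ i, a i * (Real.exp (k * a i) / ∑ j, Real.exp (k * a j))) -
        Real.log (∑ i, Real.exp (k * a i)) / k) ≤ 0 := by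
  change HasDerivAt _ ((1 / k) * ((∑ i, a i * softmax a k i) - _)) k ∧
    (1 / k) * ((∑ i, a i * softmax a k i) - _) ≤ 0
  constructor
  · refine ((hasDerivAt_log_sum_exp_mul a k).div (hasDerivAt_id' k) hk.ne').congr_deriv ?_
    field_simp
  · have hmean : ∑ i, a i * softmax a k i ≤ log (∑ i, exp (k * a i)) / k :=
      sum_mul_softmax_le k fun i => by
        rw [le_div_iff₀ hk, mul_comm]
        exact mul_le_log_sum_exp_mul a k i
    exact mul_nonpos_of_nonneg_of_nonpos (by positivity) (sub_nonpos.mpr hmean)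
end

section
/- Let S and A be finite nonempty sets, P a transition kernel with P(s'|s,a) ≥ 0 and ∑_{s'} P(s'|s,a) = 1, r : S → ℝ a reward, 0 ≤ γ < 1, and k > 0. Then the g-soft Bellman operator (TV)(s) = (1/k)·log(∑_{a∈A} exp(k·∑_{s'} P(s'|s,a)·(r(s') + γ·V(s')))) is a γ-contraction on ℝ^S with the sup norm, and hence has a unique fixed point. -/
/-!
Log-sum-exp is monotone and commutes with adding a constant to all its arguments, hence is
1-Lipschitz for the sup norm. Rescaling inside by `k` and outside by `1 / k` keeps this, and
averaging against a probability vector is 1-Lipschitz too, so the g-soft Bellman operator is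
`γ`-Lipschitz. The fixed point comes from Banach's fixed point theorem.
-/

open Real Finset

open scoped NNReal

theorem lipschitzWith_pi {α ι : Type*} {β : ι → Type*} [PseudoEMetricSpace α] [Fintype ι]
    [∀ i, PseudoEMetricSpace (β i)] {K : ℝ≥0} {f : α → ∀ i, β i}
    (hf : ∀ i, LipschitzWith K fun x => f x i) : LipschitzWith K f :=
  fun x y => edist_pi_le_iff.2 fun i => hf i x y

section

variable {ι : Type*} [Fintype ι]

theorem Real.apply_le_apply_add_dist (x y : ι → ℝ) (i : ι) : x i ≤ y i + dist x y := by
  linarith [Real.sub_le_dist (x i) (y i), dist_le_pi_dist x y i]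

theorem lipschitzWith_log_sum_exp :
    LipschitzWith 1 fun x : ι → ℝ => log (∑ i, exp (x i)) := by
  refine LipschitzWith.of_le_add fun x y => ?_
  rcases isEmpty_or_nonempty ι with hι | hι
  · simp [dist_nonneg]
  have hsum : ∑ i, exp (x i) ≤ exp (dist x y) * ∑ i, exp (y i) := by
    rw [mul_sum]
    gcongr with i
    rw [← exp_add, add_comm]
    exact exp_le_exp.2 (Real.apply_le_apply_add_dist x y i)
  have hy : 0 < ∑ i, exp (y i) := by positivity
  calc log (∑ i, exp (x i)) ≤ log (exp (dist x y) * ∑ i, exp (y i)) :=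
        log_le_log (by positivity) hsum
    _ = log (∑ i, exp (y i)) + dist x y := by
        rw [log_mul (exp_ne_zero _) hy.ne', log_exp, add_comm]

/-- For `k = 0` this is identically `0`, as `1 / 0 = 0`. -/
noncomputable def softMax (k : ℝ) (x : ι → ℝ) : ℝ :=
  (1 / k) * log (∑ i, exp (k * x i))

theorem lipschitzWith_softMax (k : ℝ) : LipschitzWith 1 (softMax (ι := ι) k) := by
  have h := (lipschitzWith_smul (1 / k)).comp
    (lipschitzWith_log_sum_exp.comp (lipschitzWith_smul (α := ℝ) (β := ι → ℝ) k))
  refine h.weaken ?_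
  rcases eq_or_ne k 0 with rfl | hk
  · simp
  · simp [hk]

theorem lipschitzWith_sum_mul {p : ι → ℝ} (hp0 : ∀ i, 0 ≤ p i) (hp1 : ∑ i, p i = 1) :
    LipschitzWith 1 fun x : ι → ℝ => ∑ i, p i * x i := by
  refine LipschitzWith.of_le_add fun x y => ?_
  calc ∑ i, p i * x i ≤ ∑ i, p i * (y i + dist x y) := by
        gcongr with i
        · exact hp0 i
        · exact Real.apply_le_apply_add_dist x y i
    _ = ∑ i, p i * y i + dist x y := by
        simp only [mul_add, sum_add_distrib, ← sum_mul, hp1, one_mul]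

end

section

variable {S A : Type*} [Fintype S]

def qValue (P : S → A → S → ℝ) (r : S → ℝ) (γ : ℝ) (V : S → ℝ) (s : S) (a : A) : ℝ :=
  ∑ s', P s a s' * (r s' + γ * V s')

noncomputable def gsoftBellman [Fintype A] (P : S → A → S → ℝ) (r : S → ℝ) (γ k : ℝ)
    (V : S → ℝ) (s : S) : ℝ :=
  softMax k (qValue P r γ V s)

variable [Fintype A] {P : S → A → S → ℝ}

theorem lipschitzWith_qValue (hP0 : ∀ s a s', 0 ≤ P s a s') (hP1 : ∀ s a, ∑ s', P s a s' = 1)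
    (r : S → ℝ) (γ : ℝ) (s : S) : LipschitzWith ‖γ‖₊ fun V => qValue P r γ V s := by
  refine lipschitzWith_pi fun a => ?_
  have h := (lipschitzWith_sum_mul (hP0 s a) (hP1 s a)).comp
    ((LipschitzWith.const r).add (lipschitzWith_smul (β := S → ℝ) γ))
  rwa [zero_add, one_mul] at h

theorem lipschitzWith_gsoftBellman (hP0 : ∀ s a s', 0 ≤ P s a s')
    (hP1 : ∀ s a, ∑ s', P s a s' = 1) (r : S → ℝ) (γ k : ℝ) :
    LipschitzWith ‖γ‖₊ (gsoftBellman P r γ k) :=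
  lipschitzWith_pi fun s => by
    have h := (lipschitzWith_softMax k).comp (lipschitzWith_qValue hP0 hP1 r γ s)
    rwa [one_mul] at h

end

theorem gsoft_bellman_contraction_general {S A : Type*} [Fintype S]
    [Fintype A]
    (P : S → A → S → ℝ) (hP0 : ∀ s a s', 0 ≤ P s a s')
    (hP1 : ∀ s a, ∑ s', P s a s' = 1)
    (r : S → ℝ) (γ : ℝ) (hγ0 : 0 ≤ γ) (hγ1 : γ < 1) (k : ℝ) :
    (∀ V W : S → ℝ,
      ‖(fun s => (1 / k) * Real.log (∑ a : A,
          Real.exp (k * ∑ s', P s a s' * (r s' + γ * V s')))) -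
       (fun s => (1 / k) * Real.log (∑ a : A,
          Real.exp (k * ∑ s', P s a s' * (r s' + γ * W s'))))‖ ≤ γ * ‖V - W‖) ∧
    (∃! V : S → ℝ, ∀ s,
      V s = (1 / k) * Real.log (∑ a : A,
        Real.exp (k * ∑ s', P s a s' * (r s' + γ * V s')))) := by
  have hT := lipschitzWith_gsoftBellman hP0 hP1 r γ k
  have hγ : (‖γ‖₊ : ℝ) = γ := by simp [abs_of_nonneg hγ0]
  have hC : ContractingWith ‖γ‖₊ (gsoftBellman P r γ k) :=
    ⟨by rw [← NNReal.coe_lt_coe, hγ]; exact_mod_cast hγ1, hT⟩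
  refine ⟨fun V W => ?_, ?_⟩
  · have h := hT.dist_le_mul V W
    rwa [dist_eq_norm, dist_eq_norm, hγ] at h
  · exact ⟨_, fun s => congrFun hC.fixedPoint_isFixedPt.symm s,
      fun V hV => hC.fixedPoint_unique (funext fun s => (hV s).symm)⟩

theorem gsoft_bellman_contraction {S A : Type*} [Fintype S] [Nonempty S]
    [Fintype A] [Nonempty A]
    (P : S → A → S → ℝ) (hP0 : ∀ s a s', 0 ≤ P s a s')
    (hP1 : ∀ s a, ∑ s', P s a s' = 1)
    (r : S → ℝ) (γ : ℝ) (hγ0 : 0 ≤ γ) (hγ1 : γ < 1) (k : ℝ) (hk : 0 < k) :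
    (∀ V W : S → ℝ,
      ‖(fun s => (1 / k) * Real.log (∑ a : A,
          Real.exp (k * ∑ s', P s a s' * (r s' + γ * V s')))) -
       (fun s => (1 / k) * Real.log (∑ a : A,
          Real.exp (k * ∑ s', P s a s' * (r s' + γ * W s'))))‖ ≤ γ * ‖V - W‖) ∧
    (∃! V : S → ℝ, ∀ s,
      V s = (1 / k) * Real.log (∑ a : A,
        Real.exp (k * ∑ s', P s a s' * (r s' + γ * V s')))) :=
  gsoft_bellman_contraction_general P hP0 hP1 r γ hγ0 hγ1 k
end
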